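/- arXiv:2605.02426 — 4 statements merged into one kernel-verified Lean document; each statement's English description precedes it below -/
import Mathlib

section
/- For every positive integer n, ∑_{a > 1, gcd(a,n) = 1} μ(a)/φ(a²) = P(n) − 1, where P(n) = ∏_{p prime, p ∤ n} (1 − 1/(p(p−1))). -/
/-!
The summand `f(a) = [a ⊥ n] μ(a) / φ(a²)` is multiplicative and supported on squarefree `a`, where
it has size `1 / (a φ(a)) ≤ √2 a^(-3/2)` because `a ≤ 2 φ(a)²`. So it is absolutely summable and
its sum is the Euler product of the local factors `1 + f(p)`, which are `1` for `p ∣ n` and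
`1 - 1 / (p (p - 1))` otherwise. Removing the term `a = 1` accounts for the `- 1`.
-/

open ArithmeticFunction
open scoped ArithmeticFunction.Moebius Nat

theorem Nat.totient_sq (a : ℕ) : φ (a ^ 2) = φ a * a := by
  rcases a.eq_zero_or_pos with rfl | ha
  · simp
  have h := Nat.totient_gcd_mul_totient_mul a a
  rw [Nat.gcd_self, mul_assoc] at h
  rw [sq]
  exact Nat.eq_of_mul_eq_mul_left (Nat.totient_pos.mpr ha) h

theorem Squarefree.totient_eq_prod_primeFactors {a : ℕ} (ha : Squarefree a) :
    φ a = ∏ p ∈ a.primeFactors, (p - 1) := by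
  rw [Nat.totient_eq_div_primeFactors_mul, Nat.prod_primeFactors_of_squarefree ha,
    Nat.div_self (Nat.pos_of_ne_zero ha.ne_zero), one_mul]

theorem Nat.Prime.le_mul_sub_one_sq {p : ℕ} (hp : p.Prime) :
    p ≤ (if p = 2 then 2 else 1) * (p - 1) ^ 2 := by
  split_ifs with h
  · simp [h]
  · have h3 : 3 ≤ p := lt_of_le_of_ne hp.two_le (Ne.symm h)
    nlinarith [Nat.sub_add_cancel hp.one_le]

theorem Squarefree.le_two_mul_totient_sq {a : ℕ} (ha : Squarefree a) : a ≤ 2 * φ a ^ 2 :=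
  calc a = ∏ p ∈ a.primeFactors, p := (Nat.prod_primeFactors_of_squarefree ha).symm
    _ ≤ ∏ p ∈ a.primeFactors, (if p = 2 then 2 else 1) * (p - 1) ^ 2 :=
      Finset.prod_le_prod' fun p hp => (Nat.prime_of_mem_primeFactors hp).le_mul_sub_one_sq
    _ = (if 2 ∈ a.primeFactors then 2 else 1) * φ a ^ 2 := by
      rw [Finset.prod_mul_distrib, Finset.prod_ite_eq', ha.totient_eq_prod_primeFactors,
        Finset.prod_pow]
    _ ≤ 2 * φ a ^ 2 := by gcongr; split_ifs <;> norm_num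

theorem tsum_ite_one_lt {G : Type*} [AddCommGroup G] [TopologicalSpace G]
    [IsTopologicalAddGroup G] [T2Space G] {f : ℕ → G} (hf : Summable f) (h0 : f 0 = 0) :
    ∑' a, (if 1 < a then f a else 0) = ∑' a, f a - f 1 := by
  rw [hf.tsum_eq_add_tsum_ite 1, add_sub_cancel_left]
  refine tsum_congr fun a => ?_
  rcases a with _ | _ | a <;> simp [h0]

noncomputable def coprimeMoebiusTotientSq (n a : ℕ) : ℝ :=
  if a.Coprime n then (μ a : ℝ) / φ (a ^ 2) else 0

section coprimeMoebiusTotientSq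

variable (n : ℕ)

theorem coprimeMoebiusTotientSq_zero : coprimeMoebiusTotientSq n 0 = 0 := by
  simp [coprimeMoebiusTotientSq]

theorem coprimeMoebiusTotientSq_one : coprimeMoebiusTotientSq n 1 = 1 := by
  simp [coprimeMoebiusTotientSq]

theorem coprimeMoebiusTotientSq_mul {a b : ℕ} (hab : a.Coprime b) :
    coprimeMoebiusTotientSq n (a * b) =
      coprimeMoebiusTotientSq n a * coprimeMoebiusTotientSq n b := by
  simp only [coprimeMoebiusTotientSq, Nat.coprime_mul_iff_left]
  by_cases ha : a.Coprime n
  · by_cases hb : b.Coprime n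
    · rw [if_pos ⟨ha, hb⟩, if_pos ha, if_pos hb, isMultiplicative_moebius.map_mul_of_coprime hab,
        mul_pow, Nat.totient_mul (hab.pow 2 2)]
      push_cast
      ring
    · simp [hb]
  · simp [ha]

theorem coprimeMoebiusTotientSq_prime {p : ℕ} (hp : p.Prime) :
    coprimeMoebiusTotientSq n p = if p ∣ n then 0 else -1 / ((p : ℝ) * (p - 1)) := by
  simp only [coprimeMoebiusTotientSq, hp.coprime_iff_not_dvd, moebius_apply_prime hp,
    Nat.totient_sq, Nat.totient_prime hp]
  split_ifs
  · rfl
  · push_cast [Nat.cast_sub hp.one_le]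
    ring

theorem coprimeMoebiusTotientSq_prime_pow {p e : ℕ} (hp : p.Prime) (he : 2 ≤ e) :
    coprimeMoebiusTotientSq n (p ^ e) = 0 := by
  simp [coprimeMoebiusTotientSq, moebius_apply_prime_pow hp (by omega : e ≠ 0),
    show e ≠ 1 by omega]

theorem norm_coprimeMoebiusTotientSq_le (a : ℕ) :
    ‖coprimeMoebiusTotientSq n a‖ ≤ √2 * (a : ℝ) ^ (-(3 / 2) : ℝ) := by
  have hbound : 0 ≤ √2 * (a : ℝ) ^ (-(3 / 2) : ℝ) := by positivity
  by_cases hf : coprimeMoebiusTotientSq n a = 0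
  · simpa [hf] using hbound
  have hμ : μ a ≠ 0 := fun h => hf (by simp [coprimeMoebiusTotientSq, h])
  have hsf : Squarefree a := moebius_ne_zero_iff_squarefree.mp hμ
  have ha : (0 : ℝ) < a := by exact_mod_cast Nat.pos_of_ne_zero hsf.ne_zero
  have hφpos : (0 : ℝ) < φ a := by exact_mod_cast Nat.totient_pos.mpr hsf.ne_zero.bot_lt
  have hφ : √a ≤ √2 * φ a := by
    rw [← Real.sqrt_sq (Nat.cast_nonneg (φ a)), ← Real.sqrt_mul zero_le_two]
    exact Real.sqrt_le_sqrt (by exact_mod_cast hsf.le_two_mul_totient_sq)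
  have hnorm : ‖coprimeMoebiusTotientSq n a‖ ≤ 1 / (φ a * a) := by
    unfold coprimeMoebiusTotientSq
    split_ifs
    · rw [norm_div, Real.norm_eq_abs, ← Int.cast_abs, abs_moebius_eq_one_of_squarefree hsf,
        Nat.totient_sq, Real.norm_natCast]
      push_cast
      rfl
    · rw [norm_zero]
      positivity
  have h32 : (a : ℝ) ^ (3 / 2 : ℝ) = a * √a := by
    rw [show (3 / 2 : ℝ) = 1 + 1 / 2 by norm_num, Real.rpow_add ha, Real.rpow_one,
      Real.sqrt_eq_rpow]
  refine hnorm.trans ?_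
  rw [Real.rpow_neg ha.le, h32, ← div_eq_mul_inv, div_le_div_iff₀ (by positivity) (by positivity)]
  nlinarith

theorem summable_norm_coprimeMoebiusTotientSq : Summable (‖coprimeMoebiusTotientSq n ·‖) :=
  .of_nonneg_of_le (fun _ => norm_nonneg _) (norm_coprimeMoebiusTotientSq_le n)
    ((Real.summable_nat_rpow.mpr (by norm_num)).mul_left _)

theorem tsum_coprimeMoebiusTotientSq_prime_pow {p : ℕ} (hp : p.Prime) :
    ∑' e, coprimeMoebiusTotientSq n (p ^ e) =
      if p ∣ n then 1 else 1 - 1 / ((p : ℝ) * (p - 1)) := by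
  rw [tsum_eq_sum (s := {0, 1}) fun e he =>
      coprimeMoebiusTotientSq_prime_pow n hp (by simp at he; omega),
    Finset.sum_pair zero_ne_one, pow_zero, pow_one, coprimeMoebiusTotientSq_one,
    coprimeMoebiusTotientSq_prime n hp]
  split_ifs <;> ring

theorem hasProd_coprimeMoebiusTotientSq :
    HasProd (fun p : {p : ℕ // p.Prime ∧ ¬ p ∣ n} => 1 - 1 / ((p : ℝ) * (p - 1)))
      (∑' a, coprimeMoebiusTotientSq n a) := by
  have h := EulerProduct.eulerProduct_hasProd_mulIndicator (coprimeMoebiusTotientSq_one n)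
    (coprimeMoebiusTotientSq_mul n) (summable_norm_coprimeMoebiusTotientSq n)
    (coprimeMoebiusTotientSq_zero n)
  have hind : {p | p.Prime ∧ ¬ p ∣ n}.mulIndicator (fun p : ℕ => 1 - 1 / ((p : ℝ) * (p - 1))) =
      {p | p.Prime}.mulIndicator fun p => ∑' e, coprimeMoebiusTotientSq n (p ^ e) := by
    funext p
    by_cases hp : p.Prime
    · by_cases hpn : p ∣ n <;> simp [hp, hpn, tsum_coprimeMoebiusTotientSq_prime_pow n hp]
    · simp [hp]
  exact hasProd_subtype_iff_mulIndicator.mpr (hind ▸ h)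

end coprimeMoebiusTotientSq

theorem stmt_5_general (n : ℕ) :
    (∑' a : ℕ, if 1 < a ∧ Nat.gcd a n = 1 then
        (μ a : ℝ) / (Nat.totient (a ^ 2) : ℝ) else 0)
      = (∏' p : {p : ℕ // p.Prime ∧ ¬ p ∣ n},
          (1 - 1 / ((p : ℝ) * ((p : ℝ) - 1)))) - 1 := by
  have hterm : (fun a : ℕ => if 1 < a ∧ Nat.gcd a n = 1 then (μ a : ℝ) / φ (a ^ 2) else 0) =
      fun a => if 1 < a then coprimeMoebiusTotientSq n a else 0 := by
    funext a
    rw [ite_and]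
    rfl
  rw [hterm, tsum_ite_one_lt (summable_norm_coprimeMoebiusTotientSq n).of_norm
    (coprimeMoebiusTotientSq_zero n), coprimeMoebiusTotientSq_one,
    (hasProd_coprimeMoebiusTotientSq n).tprod_eq]

theorem stmt_5 (n : ℕ) (hn : 0 < n) :
    (∑' a : ℕ, if 1 < a ∧ Nat.gcd a n = 1 then
        (μ a : ℝ) / (Nat.totient (a ^ 2) : ℝ) else 0)
      = (∏' p : {p : ℕ // p.Prime ∧ ¬ p ∣ n},
          (1 - 1 / ((p : ℝ) * ((p : ℝ) - 1)))) - 1 :=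
  stmt_5_general n
end

section
/- For every positive integer n, ∏_{p prime, p ∤ n} (1 − 1/(p(p−1))) ≤ C_Artin · ∏_{p ≤ q_{ω(n)}} (1 + 1/(p² − p − 1)), where C_Artin = ∏_{p prime} (1 − 1/(p(p−1))) is Artin's constant, ω(n) is the number of distinct prime factors of n, and q_i is the i-th prime. -/
/-!
With `g p = 1 - 1/(p(p-1))`, the right-hand factor is `∏_{i ≤ ω(n)} g(q_i)⁻¹`. As `∑_p log g p`
converges, Artin's constant is `∏_{p ∣ n} g p` times the left-hand side, so it suffices that
`∏_{i ≤ ω(n)} g(q_i) ≤ ∏_{p ∣ n} g p`. This holds factor by factor: `g` increases on `[2, ∞)` and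
the `i`-th smallest prime divisor of `n` is at least `q_i`.
-/

open Finset Real

theorem Nat.nth_le_nth_of_imp {p q : ℕ → Prop} (hpq : ∀ k, p k → q k) {n : ℕ}
    (hn : ∀ hf : {k | p k}.Finite, n < #hf.toFinset) : nth q n ≤ nth p n := by
  classical
  refine Nat.lt_succ_iff.mp (Nat.nth_lt_of_lt_count ?_)
  calc n < count p (nth p n + 1) := by rw [Nat.count_nth_succ hn]; omega
    _ ≤ count q (nth p n + 1) := Nat.count_mono_left fun k _ => hpq k

theorem Finset.prod_nth_le_prod {R : Type*} [CommMonoidWithZero R] [PartialOrder R]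
    [ZeroLEOneClass R] [PosMulMono R] {q : ℕ → Prop} (hq : {k | q k}.Infinite) {f : ℕ → R}
    (hf₀ : ∀ k, q k → 0 ≤ f k) (hf : MonotoneOn f {k | q k}) {s : Finset ℕ}
    (hs : ∀ k ∈ s, q k) : ∏ i ∈ range #s, f (Nat.nth q i) ≤ ∏ k ∈ s, f k := by
  have hfin : {k | k ∈ s}.Finite := s.finite_toSet
  have hlt {i : ℕ} (hi : i ∈ range #s) : ∀ hf : {k | k ∈ s}.Finite, i < #hf.toFinset := by
    simpa using hi
  calc ∏ i ∈ range #s, f (Nat.nth q i) ≤ ∏ i ∈ range #s, f (Nat.nth (· ∈ s) i) := by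
        refine prod_le_prod (fun i _ => hf₀ _ (Nat.nth_mem_of_infinite hq i)) fun i hi => ?_
        exact hf (Nat.nth_mem_of_infinite hq i) (hs _ (Nat.nth_mem _ (hlt hi)))
          (Nat.nth_le_nth_of_imp hs (hlt hi))
    _ = ∏ k ∈ s, f k := by
        have himage : (range #s).image (Nat.nth (· ∈ s)) = s :=
          coe_injective (by simpa using Nat.image_nth_Iio_card hfin)
        rw [← prod_image (by simpa using Nat.nth_injOn hfin), himage]

theorem Real.tprod_subtype_mul_tprod_subtype_compl {ι : Type*} {f : ι → ℝ}
    (hf : ∀ i, 0 < f i) (hlog : Summable fun i => log (f i)) (s : Set ι) :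
    (∏' i : s, f i) * ∏' i : ↑sᶜ, f i = ∏' i, f i := by
  rw [← rexp_tsum_eq_tprod (f := fun i : s => f i) (fun i => hf i) (hlog.subtype s),
    ← rexp_tsum_eq_tprod (f := fun i : ↑sᶜ => f i) (fun i => hf i) (hlog.subtype sᶜ),
    ← exp_add, hlog.tsum_subtype_add_tsum_subtype_compl, rexp_tsum_eq_tprod hf hlog]

theorem Nat.tprod_primes_eq_prod_primeFactors_mul {n : ℕ} (hn : n ≠ 0) {f : ℕ → ℝ}
    (hf : ∀ p : Nat.Primes, 0 < f p) (hlog : Summable fun p : Nat.Primes => Real.log (f p)) :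
    ∏' p : Nat.Primes, f p =
      (∏ p ∈ n.primeFactors, f p) * ∏' p : {p // p.Prime ∧ ¬ p ∣ n}, f p := by
  rw [← Real.tprod_subtype_mul_tprod_subtype_compl hf hlog {p | (p : ℕ) ∣ n},
    ← Finset.tprod_subtype]
  congr 1
  · exact ((Equiv.subtypeSubtypeEquivSubtypeInter _ _).trans
      (Equiv.subtypeEquivRight fun p => (mem_primeFactors_of_ne_zero hn).symm)).tprod_eq
      (fun p : n.primeFactors => f p)
  · exact (Equiv.subtypeSubtypeEquivSubtypeInter _ _).tprod_eq
      (fun p : {p // p.Prime ∧ ¬ p ∣ n} => f p)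

noncomputable def artinFactor (p : ℕ) : ℝ := 1 - 1 / (p * (p - 1))

theorem artinFactor_eq_div {p : ℕ} (hp : 2 ≤ p) :
    artinFactor p = ((p : ℝ) ^ 2 - p - 1) / (p * (p - 1)) := by
  have : (2 : ℝ) ≤ p := by exact_mod_cast hp
  have : (p : ℝ) ≠ 0 := by positivity
  have : (p : ℝ) - 1 ≠ 0 := by linarith
  rw [artinFactor]
  field_simp

theorem artinFactor_pos {p : ℕ} (hp : 2 ≤ p) : 0 < artinFactor p := by
  have : (2 : ℝ) ≤ p := by exact_mod_cast hp
  rw [artinFactor_eq_div hp]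
  apply div_pos <;> nlinarith

theorem inv_artinFactor {p : ℕ} (hp : 2 ≤ p) :
    (artinFactor p)⁻¹ = 1 + 1 / ((p : ℝ) ^ 2 - p - 1) := by
  have : (2 : ℝ) ≤ p := by exact_mod_cast hp
  have : (p : ℝ) ^ 2 - p - 1 ≠ 0 := by nlinarith
  rw [artinFactor_eq_div hp, inv_div, one_add_div this]
  ring

theorem artinFactor_monotoneOn : MonotoneOn artinFactor {p | 2 ≤ p} := by
  intro p hp q hq hpq
  have hp' : (2 : ℝ) ≤ p := by exact_mod_cast hp
  have hpq' : (p : ℝ) ≤ q := by exact_mod_cast hpq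
  have : (0 : ℝ) < p * (p - 1) := by nlinarith
  have := one_div_le_one_div_of_le this (by nlinarith : (p : ℝ) * (p - 1) ≤ q * (q - 1))
  simp only [artinFactor]
  linarith

theorem Nat.Primes.summable_one_div_mul_sub_one :
    Summable fun p : Nat.Primes => 1 / (((p : ℕ) : ℝ) * ((p : ℕ) - 1)) := by
  refine (((summable_one_div_nat_pow.mpr one_lt_two).subtype _).mul_left 2).of_nonneg_of_le
    (fun p => ?_) fun p => ?_
  all_goals have : (2 : ℝ) ≤ (p : ℕ) := by exact_mod_cast p.2.two_le
  · have : (0 : ℝ) < (p : ℕ) * ((p : ℕ) - 1) := by nlinarith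
    positivity
  · show _ ≤ 2 * (1 / ((p : ℕ) : ℝ) ^ 2)
    rw [mul_one_div, div_le_div_iff₀ (by nlinarith) (by positivity)]
    nlinarith

theorem summable_log_artinFactor : Summable fun p : Nat.Primes => log (artinFactor p) := by
  simpa [artinFactor, sub_eq_add_neg] using
    summable_log_one_add_of_summable Nat.Primes.summable_one_div_mul_sub_one.neg

theorem stmt_7 (n : ℕ) (hn : 0 < n) :
    (∏' p : {p : ℕ // p.Prime ∧ ¬ p ∣ n},
        (1 - 1 / ((p : ℝ) * ((p : ℝ) - 1))))
      ≤ (∏' p : Nat.Primes, (1 - 1 / ((p : ℝ) * ((p : ℝ) - 1)))) *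
        ∏ i ∈ Finset.range n.primeFactors.card,
          (1 + 1 / ((Nat.nth Nat.Prime i : ℝ) ^ 2 - (Nat.nth Nat.Prime i : ℝ) - 1)) := by
  set k := #n.primeFactors
  have hq : ∏ i ∈ range k, (1 + 1 / ((Nat.nth Nat.Prime i : ℝ) ^ 2 - Nat.nth Nat.Prime i - 1))
      = (∏ i ∈ range k, artinFactor (Nat.nth Nat.Prime i))⁻¹ := by
    rw [← prod_inv_distrib]
    exact prod_congr rfl fun i _ => (inv_artinFactor (Nat.prime_nth_prime i).two_le).symm
  have hle : ∏ i ∈ range k, artinFactor (Nat.nth Nat.Prime i) ≤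
      ∏ p ∈ n.primeFactors, artinFactor p :=
    prod_nth_le_prod Nat.infinite_setOfPred_prime (fun p hp => (artinFactor_pos hp.two_le).le)
      (artinFactor_monotoneOn.mono fun p hp => hp.two_le) fun _ => Nat.prime_of_mem_primeFactors
  have hpos : 0 < ∏ i ∈ range k, artinFactor (Nat.nth Nat.Prime i) :=
    prod_pos fun i _ => artinFactor_pos (Nat.prime_nth_prime i).two_le
  have hL : 0 ≤ ∏' p : {p // p.Prime ∧ ¬ p ∣ n}, artinFactor p :=
    tprod_nonneg fun p => (artinFactor_pos p.2.1.two_le).le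
  change _ ≤ (∏' p : Nat.Primes, artinFactor p) * _
  rw [Nat.tprod_primes_eq_prod_primeFactors_mul hn.ne' (fun p => artinFactor_pos p.2.two_le)
    summable_log_artinFactor, hq, ← div_eq_mul_inv, le_div_iff₀ hpos, mul_comm]
  exact mul_le_mul_of_nonneg_right hle hL
end

section
/- If n ≥ 3, then ω(n) ≤ 1.3841·log n / log log n, where ω(n) is the number of distinct prime factors of n. -/
/-!
Let `k = ω(n)` and `L = log n`. The product `P_k` of the first `k` primes is at most `n`,
and `x ↦ log x / x` decreases on `[e, ∞)`, so it suffices to find some `a` with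
`e ≤ a ≤ log P_k` and `k log a ≤ 1.3841 a`. For `k ≤ 3` the inequality `log L ≤ L / e` gives
the bound directly. For `k ≥ 16`: three consecutive primes above 3 span at least 6 (they are
`±1 mod 6`), so the `j`-th prime (counting from 0) is at least `3j + 5` once `j ≥ 14`, whence
`log P_k ≥ k log k`; with `a = k log k` the claim becomes `log log k ≤ 0.3841 log k`, again a
case of `log x ≤ x / e`. The remaining `k` are checked numerically, taking `a = (p/q) log 2`
with `2^p ≤ P_k^q` and bounding `log a` from above by a Taylor polynomial of `exp`. The
constant is essentially attained at `k = 9`, `n = 2 · 3 · 5 ⋯ 23`.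
-/

open Real Finset

noncomputable def prodFirstPrimes (k : ℕ) : ℕ := ∏ j ∈ range k, Nat.nth Nat.Prime j

theorem prodFirstPrimes_pos (k : ℕ) : 0 < prodFirstPrimes k :=
  prod_pos fun j _ => (Nat.prime_nth_prime j).pos

theorem card_le_count {P : ℕ → Prop} [DecidablePred P] {S : Finset ℕ} {a : ℕ}
    (hS : ∀ x ∈ S, P x ∧ x < a) : #S ≤ Nat.count P a := by
  rw [Nat.count_eq_card_filter_range]
  exact card_le_card fun x hx => mem_filter.2 ⟨mem_range.2 (hS x hx).2, (hS x hx).1⟩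

theorem prodFirstPrimes_card_le_prod {S : Finset ℕ} (hS : ∀ p ∈ S, p.Prime) :
    prodFirstPrimes #S ≤ ∏ p ∈ S, p := by
  induction S using Finset.induction_on_max with
  | empty => simp [prodFirstPrimes]
  | insert a S ha ih =>
    have haS : a ∉ S := fun h => lt_irrefl a (ha a h)
    have hcount : #S + 1 ≤ Nat.count Nat.Prime (a + 1) := by
      rw [← card_insert_of_notMem haS]
      refine card_le_count fun p hp => ⟨hS p hp, ?_⟩
      rcases mem_insert.1 hp with rfl | hp
      · exact p.lt_succ_self
      · exact (ha p hp).trans a.lt_succ_self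
    have hnth : Nat.nth Nat.Prime #S ≤ a := Nat.lt_succ_iff.1 (Nat.nth_lt_of_lt_count hcount)
    rw [card_insert_of_notMem haS, prod_insert haS, prodFirstPrimes, prod_range_succ, mul_comm]
    exact Nat.mul_le_mul hnth (ih fun p hp => hS p (mem_insert_of_mem hp))

theorem prodFirstPrimes_card_primeFactors_le {n : ℕ} (hn : n ≠ 0) :
    prodFirstPrimes #n.primeFactors ≤ n :=
  (prodFirstPrimes_card_le_prod fun _ => Nat.prime_of_mem_primeFactors).trans
    (Nat.le_of_dvd (Nat.pos_of_ne_zero hn) (Nat.prod_primeFactors_dvd n))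

def smallPrimes : List ℕ := [2, 3, 5, 7, 11, 13, 17, 19, 23, 29, 31, 37, 41, 43, 47, 53]

theorem nth_prime_eq_getD_smallPrimes {j : ℕ} (hj : j < 16) :
    Nat.nth Nat.Prime j = smallPrimes.getD j 0 := by
  have hprime : ∀ p ∈ smallPrimes, p.Prime := by decide
  have hcount : smallPrimes.map (Nat.count Nat.Prime) = List.range 16 := by decide
  have hlen : j < smallPrimes.length := hj
  have hcj : Nat.count Nat.Prime smallPrimes[j] = j := by
    simpa [hlen, hj] using congrArg (·[j]?) hcount
  rw [List.getD_eq_getElem _ _ hlen, ← Nat.nth_count (hprime _ (List.getElem_mem hlen)), hcj]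

theorem prodFirstPrimes_eq_prod_smallPrimes {k : ℕ} (hk : k ≤ 16) :
    prodFirstPrimes k = ∏ j ∈ range k, smallPrimes.getD j 0 :=
  prod_congr rfl fun _ hj => nth_prime_eq_getD_smallPrimes ((mem_range.1 hj).trans_le hk)

theorem Nat.Prime.mod_six_eq_one_or_five {p : ℕ} (hp : p.Prime) (h3 : 3 < p) :
    p % 6 = 1 ∨ p % 6 = 5 := by
  have h2 : ¬ 2 ∣ p := fun h => by
    have := (Nat.prime_dvd_prime_iff_eq Nat.prime_two hp).1 h; omega
  have h3' : ¬ 3 ∣ p := fun h => by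
    have := (Nat.prime_dvd_prime_iff_eq Nat.prime_three hp).1 h; omega
  omega

theorem add_six_le_of_prime_lt_lt {p q r : ℕ} (hp : p.Prime) (hq : q.Prime) (hr : r.Prime)
    (h3 : 3 < p) (hpq : p < q) (hqr : q < r) : p + 6 ≤ r := by
  have := hp.mod_six_eq_one_or_five h3
  have := hq.mod_six_eq_one_or_five (h3.trans hpq)
  have := hr.mod_six_eq_one_or_five (h3.trans (hpq.trans hqr))
  omega

theorem three_mul_add_five_le_nth_prime {j : ℕ} (hj : 14 ≤ j) :
    3 * j + 5 ≤ Nat.nth Nat.Prime j := by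
  induction j using Nat.strong_induction_on with
  | _ j ih =>
    rcases (by omega : j = 14 ∨ j = 15 ∨ 16 ≤ j) with rfl | rfl | hj16
    · rw [nth_prime_eq_getD_smallPrimes (by norm_num)]; decide
    · rw [nth_prime_eq_getD_smallPrimes (by norm_num)]; decide
    · have hmono := Nat.nth_strictMono Nat.infinite_setOfPred_prime
      have := ih (j - 2) (by omega) (by omega)
      have := add_six_le_of_prime_lt_lt (Nat.prime_nth_prime (j - 2))
        (Nat.prime_nth_prime (j - 1)) (Nat.prime_nth_prime j) (by omega)
        (hmono (by omega)) (hmono (by omega))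
      omega

theorem mul_log_le_log_prodFirstPrimes {k : ℕ} (hk : 16 ≤ k) :
    k * log k ≤ log (prodFirstPrimes k) := by
  induction k, hk using Nat.le_induction with
  | base =>
    have h16 : ((16 : ℕ) : ℝ) * log (16 : ℕ) = log (2 ^ 64) := by
      rw [show ((16 : ℕ) : ℝ) = 2 ^ 4 by norm_num, log_pow, log_pow]; push_cast; ring
    rw [h16, prodFirstPrimes_eq_prod_smallPrimes le_rfl]
    exact log_le_log (by positivity) (by norm_cast)
  | succ k hk ih =>
    have hk0 : (0 : ℝ) < k := by positivity
    have hstep : k * log (k + 1) ≤ k * log k + 1 := by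
      have h := log_le_sub_one_of_pos (x := (k + 1) / k) (by positivity)
      rw [log_div (by positivity) hk0.ne', div_sub_one hk0.ne', add_sub_cancel_left,
        le_div_iff₀ hk0] at h
      linarith
    have hnth : 1 + log (k + 1) ≤ log (Nat.nth Nat.Prime k) := by
      have h3 : (3 : ℝ) * (k + 1) ≤ Nat.nth Nat.Prime k := by
        have := three_mul_add_five_le_nth_prime (by omega : 14 ≤ k)
        have : (3 * k + 5 : ℝ) ≤ Nat.nth Nat.Prime k := by exact_mod_cast this
        linarith
      have hlog3 : 1 < log 3 := by rw [lt_log_iff_exp_lt (by norm_num)]; exact exp_one_lt_three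
      have := log_le_log (by positivity) h3
      rw [log_mul (by norm_num) (by positivity)] at this
      linarith
    rw [prodFirstPrimes, prod_range_succ, Nat.cast_mul,
      log_mul (by exact_mod_cast (prodFirstPrimes_pos k).ne')
        (by exact_mod_cast (Nat.prime_nth_prime k).ne_zero), ← prodFirstPrimes]
    push_cast
    linarith

theorem log_le_div_exp_one {x : ℝ} (hx : 0 < x) : log x ≤ x / exp 1 := by
  have h := log_le_sub_one_of_pos (div_pos hx (exp_pos 1))
  rw [log_div hx.ne' (exp_pos 1).ne', log_exp] at h
  linarith

theorem mul_log_le_of_le {k c a L : ℝ} (hk : 0 ≤ k) (ha : exp 1 ≤ a) (haL : a ≤ L)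
    (h : k * log a ≤ c * a) : k * log L ≤ c * L := by
  have ha0 : 0 < a := (exp_pos 1).trans_le ha
  have hL0 : 0 < L := ha0.trans_le haL
  have hmono : log L / L ≤ log a / a := log_div_self_antitoneOn ha (ha.trans haL) haL
  have hc : k * (log a / a) ≤ c := by rwa [← mul_div_assoc, div_le_iff₀ ha0]
  calc k * log L = k * (log L / L) * L := by field_simp
    _ ≤ k * (log a / a) * L := by gcongr
    _ ≤ c * L := by gcongr

theorem div_mul_log_two_le_log {p q P : ℕ} (hq : 0 < q) (h : 2 ^ p ≤ P ^ q) :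
    (p / q : ℝ) * log 2 ≤ log P := by
  have hP : 0 < P := Nat.pos_of_ne_zero fun hP => by simp [hP, hq.ne'] at h
  have hlog : (p : ℝ) * log 2 ≤ q * log P := by
    rw [← log_pow, ← log_pow]
    exact log_le_log (by positivity) (by exact_mod_cast h)
  rw [div_mul_eq_mul_div, div_le_iff₀ (by exact_mod_cast hq)]
  linarith

theorem mul_log_le_of_certificate {k c t L : ℝ} {P p q N : ℕ} (hL : log P ≤ L)
    (hk : 0 ≤ k) (hc : 0 ≤ c) (hq : 0 < q) (hpow : 2 ^ p ≤ P ^ q)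
    (he : 2.7182818286 * (q : ℝ) ≤ p * 0.6931471803) (ht : 0 ≤ t)
    (hexp : (p : ℝ) * 0.6931471808 / q ≤ ∑ i ∈ range N, t ^ i / i.factorial)
    (hkt : k * t ≤ c * ((p : ℝ) * 0.6931471803 / q)) : k * log L ≤ c * L := by
  have hq0 : (0 : ℝ) < q := by exact_mod_cast hq
  have hlo : (p / q : ℝ) * 0.6931471803 ≤ p / q * log 2 := by gcongr; exact log_two_gt_d9.le
  have hhi : (p / q : ℝ) * log 2 ≤ p / q * 0.6931471808 := by gcongr; exact log_two_lt_d9.le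
  have he' : exp 1 ≤ p / q * log 2 := by
    refine exp_one_lt_d9.le.trans (hlo.trans' ?_)
    rwa [div_mul_eq_mul_div, le_div_iff₀ hq0]
  refine mul_log_le_of_le hk he' ((div_mul_log_two_le_log hq hpow).trans hL) ?_
  have hloga : log (p / q * log 2) ≤ t := by
    rw [log_le_iff_le_exp ((exp_pos 1).trans_le he')]
    refine hhi.trans (le_trans ?_ (sum_le_exp_of_nonneg ht N))
    rwa [div_mul_eq_mul_div]
  calc k * log (p / q * log 2) ≤ k * t := by gcongr
    _ ≤ c * (p * 0.6931471803 / q) := hkt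
    _ ≤ c * (p / q * log 2) := by rw [← div_mul_eq_mul_div]; gcongr

theorem mul_log_le_of_le_three {k L : ℝ} (hk0 : 0 ≤ k) (hk : k ≤ 3) (hL : 0 < L) :
    k * log L ≤ 1.3841 * L :=
  calc k * log L ≤ k * (L / exp 1) := by gcongr; exact log_le_div_exp_one hL
    _ ≤ 3 * (L / exp 1) := by gcongr
    _ ≤ 1.3841 * L := by
      rw [mul_div_assoc', div_le_iff₀ (exp_pos 1)]; nlinarith [exp_one_gt_d9]

theorem mul_log_le_of_sixteen_le {k : ℕ} (hk : 16 ≤ k) {L : ℝ}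
    (hL : log (prodFirstPrimes k) ≤ L) : k * log L ≤ 1.3841 * L := by
  have hk16 : (16 : ℝ) ≤ k := by exact_mod_cast hk
  have hlogk : 1 ≤ log k := by
    rw [le_log_iff_exp_le (by positivity)]; linarith [exp_one_lt_three]
  have hloglog : log (log k) ≤ 0.3841 * log k := by
    refine (log_le_div_exp_one (by positivity)).trans ?_
    rw [div_le_iff₀ (exp_pos 1)]; nlinarith [exp_one_gt_d9]
  refine mul_log_le_of_le k.cast_nonneg ?_ ((mul_log_le_log_prodFirstPrimes hk).trans hL) ?_
  · nlinarith [exp_one_lt_three]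
  · rw [log_mul (by positivity) (by positivity)]
    nlinarith

theorem mul_log_le_of_four_le_of_lt_sixteen {k : ℕ} (hk4 : 4 ≤ k) (hk16 : k < 16) {L : ℝ}
    (hL : log (prodFirstPrimes k) ≤ L) : k * log L ≤ 1.3841 * L := by
  rw [prodFirstPrimes_eq_prod_smallPrimes hk16.le] at hL
  interval_cases k <;> [
    apply mul_log_le_of_certificate hL (p := 7) (q := 1) (t := 1.6789) (N := 20);
    apply mul_log_le_of_certificate hL (p := 11) (q := 1) (t := 2.1106) (N := 20);
    apply mul_log_le_of_certificate hL (p := 29) (q := 2) (t := 2.3185) (N := 20);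
    apply mul_log_le_of_certificate hL (p := 75) (q := 4) (t := 2.5697) (N := 20);
    apply mul_log_le_of_certificate hL (p := 116) (q := 5) (t := 2.7822) (N := 20);
    apply mul_log_le_of_certificate hL (p := 1137) (q := 41) (t := 2.9561) (N := 20);
    apply mul_log_le_of_certificate hL (p := 65) (q := 2) (t := 3.118) (N := 20);
    apply mul_log_le_of_certificate hL (p := 75) (q := 2) (t := 3.2706) (N := 20);
    apply mul_log_le_of_certificate hL (p := 85) (q := 2) (t := 3.3978) (N := 20);
    apply mul_log_le_of_certificate hL (p := 48) (q := 1) (t := 3.5423) (N := 20);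
    apply mul_log_le_of_certificate hL (p := 53) (q := 1) (t := 3.6319) (N := 20);
    apply mul_log_le_of_certificate hL (p := 59) (q := 1) (t := 3.7735) (N := 20)] <;>
  first
    | decide +kernel
    | norm_num [sum_range_succ, Nat.factorial]

theorem mul_log_le_of_log_prodFirstPrimes_le (k : ℕ) {L : ℝ} (hL1 : 1 < L)
    (hL : log (prodFirstPrimes k) ≤ L) : k * log L ≤ 1.3841 * L := by
  rcases (by omega : k ≤ 3 ∨ (4 ≤ k ∧ k < 16) ∨ 16 ≤ k) with hk | ⟨hk4, hk16⟩ | hk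
  · exact mul_log_le_of_le_three k.cast_nonneg (by exact_mod_cast hk) (by linarith)
  · exact mul_log_le_of_four_le_of_lt_sixteen hk4 hk16 hL
  · exact mul_log_le_of_sixteen_le hk hL

theorem stmt_8 (n : ℕ) (hn : 3 ≤ n) :
    (n.primeFactors.card : ℝ) ≤ 1.3841 * Real.log n / Real.log (Real.log n) := by
  have hL1 : 1 < log n := by
    rw [lt_log_iff_exp_lt (by positivity)]
    exact exp_one_lt_three.trans_le (by exact_mod_cast hn)
  rw [le_div_iff₀ (log_pos hL1)]
  refine mul_log_le_of_log_prodFirstPrimes_le _ hL1 (log_le_log ?_ ?_)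
  · exact_mod_cast prodFirstPrimes_pos _
  · exact_mod_cast prodFirstPrimes_card_primeFactors_le (by omega)
end

section
/- Assume that for all t ≥ 59, y/(2(log y)²) < π(y) − y/log y < 3y/(2(log y)²). Then for every real y ≥ 59, ∑_{p prime, p > y} 1/p² > (1/(y·log y))·(1 − 5/(2·log y)). -/
/-!
Since `1 / p² = ∫_{t ≥ p} 2 / t³ dt`, swapping sum and integral (partial summation) gives
`∑_{p > y} 1 / p² = ∫_y^∞ (π(t) - π(y)) · 2 / t³ dt`.
Inserting the lower bound `π(t) > t / log t + t / (2 log² t)` and discarding a term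
`-2 / (t² log³ t)`, the integrand dominates the derivative of the elementary function
`1 / (t log² t) - 2 / (t log t)`, so the integral is at least
`2 / (y log y) - 1 / (y log² y) - π(y) / y²`; the upper bound for `π(y)` finishes the proof.
-/

open MeasureTheory Set Filter Real Topology
open scoped Finset

lemma hasDerivAt_neg_inv_sq {t : ℝ} (ht : t ≠ 0) :
    HasDerivAt (fun t : ℝ => -(t ^ 2)⁻¹) (2 / t ^ 3) t := by
  refine ((hasDerivAt_pow 2 t).inv (pow_ne_zero 2 ht)).neg.congr_deriv ?_
  field_simp
  ring

lemma tendsto_neg_inv_sq_atTop : Tendsto (fun t : ℝ => -(t ^ 2)⁻¹) atTop (𝓝 0) := by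
  simpa using (tendsto_pow_atTop (α := ℝ) two_ne_zero).inv_tendsto_atTop.neg

lemma integrableOn_Ioi_two_div_cube {c : ℝ} (hc : 0 < c) :
    IntegrableOn (fun t : ℝ => 2 / t ^ 3) (Ioi c) :=
  integrableOn_Ioi_deriv_of_nonneg' (fun t ht => hasDerivAt_neg_inv_sq (hc.trans_le ht).ne')
    (fun t ht => by have := hc.trans ht; positivity) tendsto_neg_inv_sq_atTop

lemma integral_Ioi_two_div_cube {c : ℝ} (hc : 0 < c) :
    ∫ t in Ioi c, 2 / t ^ 3 = 1 / c ^ 2 := by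
  rw [integral_Ioi_of_hasDerivAt_of_tendsto'
    (fun t ht => hasDerivAt_neg_inv_sq (hc.trans_le ht).ne')
    (integrableOn_Ioi_two_div_cube hc) tendsto_neg_inv_sq_atTop]
  ring

lemma integrable_indicator_Ici_two_div_cube {c : ℝ} (hc : 0 < c) :
    Integrable ((Ici c).indicator fun t : ℝ => 2 / t ^ 3) := by
  rw [integrable_indicator_iff measurableSet_Ici, integrableOn_Ici_iff_integrableOn_Ioi]
  exact integrableOn_Ioi_two_div_cube hc

lemma integral_indicator_Ici_two_div_cube {c : ℝ} (hc : 0 < c) :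
    ∫ t, (Ici c).indicator (fun t : ℝ => 2 / t ^ 3) t = 1 / c ^ 2 := by
  rw [integral_indicator measurableSet_Ici, ← setIntegral_congr_set Ioi_ae_eq_Ici,
    integral_Ioi_two_div_cube hc]

lemma Nat.count_add_card_filter_Ico (P : ℕ → Prop) [DecidablePred P] {a b : ℕ} (hab : a ≤ b) :
    Nat.count P a + #{n ∈ Finset.Ico a b | P n} = Nat.count P b := by
  simp only [Nat.count_eq_card_filter_range, Finset.card_filter]
  exact Finset.sum_range_add_sum_Ico _ hab

lemma Nat.count_succ_sub_count_succ (P : ℕ → Prop) [DecidablePred P] {a b : ℕ} (hab : a ≤ b) :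
    Nat.count P (b + 1) - Nat.count P (a + 1) = #{n ∈ Finset.Ioc a b | P n} := by
  rw [← Nat.count_add_card_filter_Ico P (Nat.add_le_add_right hab 1),
    Finset.Ico_add_one_add_one_eq_Ioc, Nat.add_sub_cancel_left]

lemma tsum_ite_lt_and_le_eq_count_sub (P : ℕ → Prop) [DecidablePred P] {y t : ℝ}
    (hy : 0 ≤ y) (hyt : y ≤ t) :
    ∑' n : Subtype P, (if y < n ∧ (n : ℝ) ≤ t then (1 : ℝ) else 0) =
      (Nat.count P (⌊t⌋₊ + 1) - Nat.count P (⌊y⌋₊ + 1) : ℕ) := by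
  have hmem (n : ℕ) : (y < n ∧ (n : ℝ) ≤ t) ↔ n ∈ Finset.Ioc ⌊y⌋₊ ⌊t⌋₊ := by
    rw [Finset.mem_Ioc, Nat.floor_lt hy, Nat.le_floor_iff (hy.trans hyt)]
  simp_rw [hmem]
  rw [tsum_eq_sum (s := (Finset.Ioc ⌊y⌋₊ ⌊t⌋₊).subtype P) fun n hn => by simp_all,
    Finset.sum_ite_of_true (by simp), Finset.sum_const, Finset.card_subtype, nsmul_one,
    Nat.count_succ_sub_count_succ P (Nat.floor_le_floor hyt)]

lemma integrableOn_count_sub_mul_two_div_cube (P : ℕ → Prop) [DecidablePred P] {y : ℝ}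
    (hy : 0 < y) :
    IntegrableOn
      (fun t : ℝ => ((Nat.count P (⌊t⌋₊ + 1) - Nat.count P (⌊y⌋₊ + 1) : ℕ) : ℝ) * (2 / t ^ 3))
      (Ioi y) := by
  refine ((integrableOn_Ioi_rpow_of_lt (by norm_num : (-2 : ℝ) < -1) hy).const_mul 2).mono' ?_ ?_
  · refine (Measurable.mul ?_ (by fun_prop)).aestronglyMeasurable
    exact (measurable_from_nat
      (f := fun n => ((Nat.count P (n + 1) - Nat.count P (⌊y⌋₊ + 1) : ℕ) : ℝ))).comp
      (Nat.measurable_floor (R := ℝ))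
  · filter_upwards [self_mem_ae_restrict measurableSet_Ioi] with t ht
    have ht0 : 0 < t := hy.trans ht
    have hN : Nat.count P (⌊t⌋₊ + 1) - Nat.count P (⌊y⌋₊ + 1) ≤ ⌊t⌋₊ := by
      rw [Nat.count_succ_sub_count_succ P (Nat.floor_le_floor ht.le)]
      exact (Finset.card_filter_le _ _).trans (by simp)
    rw [norm_of_nonneg (by positivity), rpow_neg ht0.le, rpow_two]
    calc _ ≤ t * (2 / t ^ 3) := by
          gcongr
          exact (Nat.cast_le.mpr hN).trans (Nat.floor_le ht0.le)
      _ = 2 * (t ^ 2)⁻¹ := by field_simp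

theorem tsum_one_div_sq_eq_integral_count_sub (P : ℕ → Prop) [DecidablePred P] {y : ℝ}
    (hy : 0 ≤ y) :
    ∑' n : Subtype P, (if y < n then 1 / (n : ℝ) ^ 2 else 0) =
      ∫ t in Ioi y, ((Nat.count P (⌊t⌋₊ + 1) - Nat.count P (⌊y⌋₊ + 1) : ℕ) : ℝ) * (2 / t ^ 3) := by
  set F : Subtype P → ℝ → ℝ := fun n =>
    if y < n then (Ici (n : ℝ)).indicator fun t => 2 / t ^ 3 else 0
  have hF_integrable (n : Subtype P) : Integrable (F n) := by
    by_cases hn : y < n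
    · simpa [F, hn] using integrable_indicator_Ici_two_div_cube (hy.trans_lt hn)
    · simp [F, hn]
  have hF_nonneg (n : Subtype P) (t : ℝ) : 0 ≤ F n t := by
    by_cases hn : y < n
    · simp only [F, if_pos hn]
      exact indicator_nonneg (fun t ht => by have := (hy.trans_lt hn).trans_le ht; positivity) t
    · simp [F, hn]
  have hF_integral (n : Subtype P) : ∫ t, F n t = if y < n then 1 / (n : ℝ) ^ 2 else 0 := by
    by_cases hn : y < n
    · simpa [F, hn] using integral_indicator_Ici_two_div_cube (hy.trans_lt hn)
    · simp [F, hn]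
  have hF_summable : Summable fun n => ∫ t, ‖F n t‖ := by
    simp only [fun n t => norm_of_nonneg (hF_nonneg n t), hF_integral]
    refine Summable.of_nonneg_of_le (fun n => by positivity) (fun n => ?_)
      ((Real.summable_one_div_nat_pow.mpr one_lt_two).comp_injective Subtype.val_injective)
    split_ifs <;> simp
  have hF_tsum (t : ℝ) : ∑' n, F n t = (Ioi y).indicator
      (fun t => ((Nat.count P (⌊t⌋₊ + 1) - Nat.count P (⌊y⌋₊ + 1) : ℕ) : ℝ) * (2 / t ^ 3)) t := by
    by_cases ht : t ∈ Ioi y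
    · rw [indicator_of_mem ht, ← tsum_ite_lt_and_le_eq_count_sub P hy ht.le, ← tsum_mul_right]
      congr with n
      by_cases hn : y < n <;> simp [F, hn, indicator_apply]
    · rw [indicator_of_notMem ht]
      refine (tsum_congr fun n => ?_).trans tsum_zero
      by_cases hn : y < n
      · have hnt : ¬ (n : ℝ) ≤ t := fun h => ht (hn.trans_le h)
        simp [F, hn, hnt]
      · simp [F, hn]
  calc ∑' n : Subtype P, (if y < n then 1 / (n : ℝ) ^ 2 else 0)
      = ∑' n, ∫ t, F n t := by simp only [hF_integral]
    _ = ∫ t, ∑' n, F n t := integral_tsum_of_summable_integral_norm hF_integrable hF_summable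
    _ = _ := by simp_rw [hF_tsum, integral_indicator measurableSet_Ioi]

/-- The derivative of `t ↦ 1 / (t log² t) - 2 / (t log t)`. It lies below
`(t / log t + t / (2 log² t)) · 2 / t³`, which has no elementary primitive. -/
noncomputable def logWeight (t : ℝ) : ℝ :=
  2 / (t ^ 2 * log t) + 1 / (t ^ 2 * log t ^ 2) - 2 / (t ^ 2 * log t ^ 3)

lemma hasDerivAt_logWeight_primitive {t : ℝ} (ht : 1 < t) :
    HasDerivAt (fun t => (t * log t ^ 2)⁻¹ - 2 * (t * log t)⁻¹) (logWeight t) t := by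
  have ht0 : t ≠ 0 := by positivity
  have hlog : log t ≠ 0 := (log_pos ht).ne'
  have h1 := (hasDerivAt_id t).mul (hasDerivAt_log ht0)
  have h2 := (hasDerivAt_id t).mul ((hasDerivAt_log ht0).pow 2)
  refine ((h2.inv (by simp [ht0, hlog])).sub
    ((h1.inv (by simp [ht0, hlog])).const_mul 2)).congr_deriv ?_
  simp only [logWeight, id, Pi.mul_apply, Pi.pow_apply]
  field_simp
  ring

lemma tendsto_logWeight_primitive_atTop :
    Tendsto (fun t => (t * log t ^ 2)⁻¹ - 2 * (t * log t)⁻¹) atTop (𝓝 0) := by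
  have h1 : Tendsto (fun t => t * log t) atTop atTop :=
    tendsto_id.atTop_mul_atTop₀ tendsto_log_atTop
  have h2 : Tendsto (fun t => t * log t ^ 2) atTop atTop :=
    tendsto_id.atTop_mul_atTop₀ ((tendsto_pow_atTop two_ne_zero).comp tendsto_log_atTop)
  simpa using h2.inv_tendsto_atTop.sub (h1.inv_tendsto_atTop.const_mul 2)

lemma logWeight_nonneg {t : ℝ} (ht : exp 1 ≤ t) : 0 ≤ logWeight t := by
  have ht0 : 0 < t := (exp_pos 1).trans_le ht
  have hlog : 1 ≤ log t := by rwa [le_log_iff_exp_le ht0]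
  have h3 : 2 / (t ^ 2 * log t ^ 3) ≤ 2 / (t ^ 2 * log t) := by
    gcongr
    exact le_self_pow₀ hlog (by norm_num)
  have h2 : 0 ≤ 1 / (t ^ 2 * log t ^ 2) := by positivity
  unfold logWeight
  linarith

lemma integrableOn_logWeight {y : ℝ} (hy : exp 1 ≤ y) : IntegrableOn logWeight (Ioi y) :=
  have hy1 : 1 < y := (one_lt_exp_iff.mpr one_pos).trans_le hy
  integrableOn_Ioi_deriv_of_nonneg'
    (fun _ ht => hasDerivAt_logWeight_primitive (hy1.trans_le ht))
    (fun _ ht => logWeight_nonneg (hy.trans ht.le)) tendsto_logWeight_primitive_atTop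

lemma integral_Ioi_logWeight {y : ℝ} (hy : exp 1 ≤ y) :
    ∫ t in Ioi y, logWeight t = 2 / (y * log y) - 1 / (y * log y ^ 2) := by
  have hy1 : 1 < y := (one_lt_exp_iff.mpr one_pos).trans_le hy
  rw [integral_Ioi_of_hasDerivAt_of_tendsto'
    (fun _ ht => hasDerivAt_logWeight_primitive (hy1.trans_le ht))
    (integrableOn_logWeight hy) tendsto_logWeight_primitive_atTop]
  simp only [one_div]
  ring

lemma logWeight_le_mul_two_div_cube {t N : ℝ} (ht : 1 < t)
    (hN : t / log t + t / (2 * log t ^ 2) < N) : logWeight t ≤ N * (2 / t ^ 3) := by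
  have ht0 : 0 < t := by linarith
  have hlog : 0 < log t := log_pos ht
  calc logWeight t ≤ 2 / (t ^ 2 * log t) + 1 / (t ^ 2 * log t ^ 2) := by
        have : 0 ≤ 2 / (t ^ 2 * log t ^ 3) := by positivity
        unfold logWeight
        linarith
    _ = (t / log t + t / (2 * log t ^ 2)) * (2 / t ^ 3) := by field_simp
    _ ≤ N * (2 / t ^ 3) := by gcongr

lemma le_integral_count_sub_mul_two_div_cube (P : ℕ → Prop) [DecidablePred P] {y : ℝ}
    (hy : exp 1 ≤ y)
    (hP : ∀ t, y < t → t / log t + t / (2 * log t ^ 2) < Nat.count P (⌊t⌋₊ + 1)) :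
    2 / (y * log y) - 1 / (y * log y ^ 2) - Nat.count P (⌊y⌋₊ + 1) * (1 / y ^ 2) ≤
      ∫ t in Ioi y, ((Nat.count P (⌊t⌋₊ + 1) - Nat.count P (⌊y⌋₊ + 1) : ℕ) : ℝ) * (2 / t ^ 3) := by
  have hy0 : 0 < y := (exp_pos 1).trans_le hy
  have hy1 : 1 < y := (one_lt_exp_iff.mpr one_pos).trans_le hy
  have hkernel := (integrableOn_Ioi_two_div_cube hy0).const_mul (Nat.count P (⌊y⌋₊ + 1) : ℝ)
  rw [← integral_Ioi_logWeight hy, ← integral_Ioi_two_div_cube hy0, ← integral_const_mul,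
    ← integral_sub (integrableOn_logWeight hy) hkernel]
  refine setIntegral_mono_on ((integrableOn_logWeight hy).sub hkernel)
    (integrableOn_count_sub_mul_two_div_cube P hy0) measurableSet_Ioi fun t ht => ?_
  rw [Nat.cast_sub (Nat.count_monotone P (by gcongr; exact ht.le)), sub_mul]
  gcongr
  exact logWeight_le_mul_two_div_cube (hy1.trans ht) (hP t ht)

theorem stmt_12
    (h : ∀ t : ℝ, 59 ≤ t →
      t / (2 * (Real.log t) ^ 2) < (Nat.primeCounting ⌊t⌋₊ : ℝ) - t / Real.log t ∧
      (Nat.primeCounting ⌊t⌋₊ : ℝ) - t / Real.log t < 3 * t / (2 * (Real.log t) ^ 2))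
    (y : ℝ) (hy : 59 ≤ y) :
    (∑' p : Nat.Primes, if y < (p : ℝ) then 1 / (p : ℝ) ^ 2 else 0)
      > (1 / (y * Real.log y)) * (1 - 5 / (2 * Real.log y)) := by
  simp only [Nat.primeCounting, Nat.primeCounting'] at h
  have hy0 : 0 < y := by linarith
  have hlog : 0 < log y := log_pos (by linarith)
  have hey : exp 1 ≤ y := (exp_one_lt_d9.trans (by norm_num)).le.trans hy
  have hπy : (Nat.count Nat.Prime (⌊y⌋₊ + 1) : ℝ) < y / log y + 3 * y / (2 * log y ^ 2) := by
    linarith [(h y hy).2]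
  have hsplit : 2 / (y * log y) - 1 / (y * log y ^ 2) -
      (y / log y + 3 * y / (2 * log y ^ 2)) * (1 / y ^ 2) =
      1 / (y * log y) * (1 - 5 / (2 * log y)) := by
    field_simp
    ring
  calc 1 / (y * log y) * (1 - 5 / (2 * log y))
      < 2 / (y * log y) - 1 / (y * log y ^ 2) - Nat.count Nat.Prime (⌊y⌋₊ + 1) * (1 / y ^ 2) := by
        rw [← hsplit]
        gcongr
    _ ≤ _ := le_integral_count_sub_mul_two_div_cube Nat.Prime hey
        fun t ht => by linarith [(h t (hy.trans ht.le)).1]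
    _ = _ := (tsum_one_div_sq_eq_integral_count_sub Nat.Prime hy0.le).symm
end
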